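/- arXiv:1905.03787 — 6 statements merged into one kernel-verified Lean document; each statement's English description precedes it below -/
import Mathlib

section
/- Let c : ZMod n → C (n ≥ 1) be a noncrossing coloring with overlap number h_c. Then for all i, j ∈ ZMod n with i ≠ j: h_c(i,j) + h_c(i+1,j+1) ≥ h_c(i,j+1) + h_c(i+1,j). (The geodesic multiplicity extracted from a single noncrossing coloring by the discrete second difference of its overlap number is a nonnegative integer.) -/
/-- A coloring `c : ZMod n → C` is *noncrossing* if there are no indices with integer
representatives `0 ≤ p < q < r < s ≤ n − 1` such that `c p = c r`, `c q = c s`, and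
`c p ≠ c q`. -/
def Noncrossing {n : ℕ} {C : Type*} (c : ZMod n → C) : Prop :=
  ¬ ∃ p q r s : ℕ, p < q ∧ q < r ∧ r < s ∧ s ≤ n - 1 ∧
    c (p : ZMod n) = c (r : ZMod n) ∧ c (q : ZMod n) = c (s : ZMod n) ∧
    c (p : ZMod n) ≠ c (q : ZMod n)

/-- The *coloring graph* of a coloring `c : ZMod n → C`: vertices are the colors in the
range of `c`, with an edge joining `c i` and `c (i+1)` for each `i` with `c i ≠ c (i+1)`. -/
def coloringGraph {n : ℕ} {C : Type*} (c : ZMod n → C) :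
    SimpleGraph (Set.range c) :=
  SimpleGraph.fromRel (fun a b => ∃ i : ZMod n, c i = a.1 ∧ c (i + 1) = b.1)

/-- The color `c i`, as a vertex of the coloring graph. -/
def vert {n : ℕ} {C : Type*} (c : ZMod n → C) (i : ZMod n) : Set.range c :=
  ⟨c i, ⟨i, rfl⟩⟩

/-- The *overlap number* `h_c(i,j)`: the graph distance between the colors `c i` and `c j`
in the coloring graph of `c`. -/
noncomputable def overlap {n : ℕ} {C : Type*} (c : ZMod n → C) (i j : ZMod n) : ℕ :=
  (coloringGraph c).dist (vert c i) (vert c j)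

open SimpleGraph

section Basic
variable {n : ℕ} {C : Type*} (c : ZMod n → C)

lemma vert_eq {a b : ZMod n} (h : c a = c b) : vert c a = vert c b := Subtype.ext h

lemma adj_of_step {a : ZMod n} (h : c a ≠ c (a+1)) :
    (coloringGraph c).Adj (vert c a) (vert c (a+1)) := by
  rw [coloringGraph, SimpleGraph.fromRel_adj]
  exact ⟨fun hh => h (congrArg Subtype.val hh), Or.inl ⟨a, rfl, rfl⟩⟩

lemma adj_iff {x y : Set.range c} :
    (coloringGraph c).Adj x y ↔ x.1 ≠ y.1 ∧ (∃ i : ZMod n, (c i = x.1 ∧ c (i+1) = y.1) ∨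
      (c i = y.1 ∧ c (i+1) = x.1)) := by
  rw [coloringGraph, SimpleGraph.fromRel_adj]
  constructor
  · rintro ⟨hne, h | h⟩
    · exact ⟨fun hh => hne (Subtype.ext hh), h.imp fun i hi => Or.inl hi⟩
    · exact ⟨fun hh => hne (Subtype.ext hh), h.imp fun i hi => Or.inr hi⟩
  · rintro ⟨hne, i, hi | hi⟩
    · exact ⟨fun hh => hne (congrArg Subtype.val hh), Or.inl ⟨i, hi⟩⟩
    · exact ⟨fun hh => hne (congrArg Subtype.val hh), Or.inr ⟨i, hi⟩⟩

lemma dist_step_le (a : ZMod n) :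
    (coloringGraph c).dist (vert c a) (vert c (a+1)) ≤ 1 := by
  by_cases h : c a = c (a+1)
  · rw [vert_eq c h, SimpleGraph.dist_self]; omega
  · have := SimpleGraph.dist_le ((adj_of_step c h).toWalk)
    simpa using this

lemma exists_walk_nat [NeZero n] (a : ZMod n) (t : ℕ) :
    ∃ w : (coloringGraph c).Walk (vert c a) (vert c (a + (t:ZMod n))), w.length ≤ t := by
  induction t with
  | zero => exact ⟨(SimpleGraph.Walk.nil).copy rfl (by simp), by simp⟩
  | succ t ih =>
    obtain ⟨w, hw⟩ := ih
    have hcast : a + (((t+1:ℕ)):ZMod n) = a + (t:ZMod n) + 1 := by push_cast; ring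
    by_cases h : c (a + (t:ZMod n)) = c (a + (t:ZMod n) + 1)
    · have e1 : vert c (a + ((t:ℕ):ZMod n)) = vert c (a + (((t+1:ℕ)):ZMod n)) := by
        rw [hcast]; exact vert_eq c h
      exact ⟨w.copy rfl e1, by simpa using hw.trans (by omega)⟩
    · have e1 : vert c (a + (t:ZMod n) + 1) = vert c (a + (((t+1:ℕ)):ZMod n)) := by
        rw [hcast]
      refine ⟨(w.append (adj_of_step c h).toWalk).copy rfl e1, ?_⟩
      simp [SimpleGraph.Walk.length_append]; omega

lemma reachable_vert [NeZero n] (a b : ZMod n) :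
    (coloringGraph c).Reachable (vert c a) (vert c b) := by
  obtain ⟨w, -⟩ := exists_walk_nat c a (b - a).val
  have : a + (((b-a).val : ℕ) : ZMod n) = b := by
    rw [ZMod.natCast_val, ZMod.cast_id]; ring
  exact ⟨w.copy rfl (by rw [this])⟩

lemma connected_coloringGraph [NeZero n] : (coloringGraph c).Connected := by
  haveI : Nonempty (Set.range c) := ⟨vert c 0⟩
  refine ⟨?_⟩
  rintro ⟨x, a, rfl⟩ ⟨y, b, rfl⟩
  exact reachable_vert c a b

lemma dist_vert_le [NeZero n] (a : ZMod n) (t : ℕ) :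
    (coloringGraph c).dist (vert c a) (vert c (a + (t:ZMod n))) ≤ t := by
  obtain ⟨w, hw⟩ := exists_walk_nat c a t
  exact le_trans (SimpleGraph.dist_le w) hw

end Basic

section Transfer
variable {n m : ℕ} {C : Type*} [NeZero n] [NeZero m] (c : ZMod n → C) (d : ZMod m → C)

lemma dist_le_transfer (hr : ∀ x : ZMod m, d x ∈ Set.range c)
    (hs : ∀ s : ZMod m, d s = d (s+1) ∨ ∃ t : ZMod n,
      (c t = d s ∧ c (t+1) = d (s+1)) ∨ (c t = d (s+1) ∧ c (t+1) = d s)) (v w : ZMod m) :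
    (coloringGraph c).dist ⟨d v, hr v⟩ ⟨d w, hr w⟩ ≤ overlap d v w := by
  have hmap : ∀ x : Set.range d, x.1 ∈ Set.range c := by
    rintro ⟨x, s, rfl⟩; exact hr s
  have hF : ∀ {x y}, (coloringGraph d).Adj x y →
      (coloringGraph c).Adj ⟨x.1, hmap x⟩ ⟨y.1, hmap y⟩ := by
    intro x y hxy
    rw [adj_iff] at hxy ⊢
    obtain ⟨hne, s, hcase⟩ := hxy
    refine ⟨hne, ?_⟩
    rcases hs s with heq | ⟨t, ht⟩
    · rcases hcase with ⟨h1, h2⟩ | ⟨h1, h2⟩ <;>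
        [exact absurd (h1.symm.trans (heq.trans h2)) hne;
         exact absurd (h2.symm.trans (heq.symm.trans h1)) hne]
    · rcases hcase with ⟨h1, h2⟩ | ⟨h1, h2⟩
      · exact ⟨t, by rw [← h1, ← h2]; exact ht⟩
      · refine ⟨t, ?_⟩
        rw [← h1, ← h2]
        exact ht.symm
  let F : coloringGraph d →g coloringGraph c :=
    ⟨fun x => ⟨x.1, hmap x⟩, fun h => hF h⟩
  obtain ⟨p, hp⟩ := (reachable_vert d v w).exists_walk_length_eq_dist
  have e1 : F (vert d v) = ⟨d v, hr v⟩ := Subtype.ext rfl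
  have e2 : F (vert d w) = ⟨d w, hr w⟩ := Subtype.ext rfl
  have := SimpleGraph.dist_le ((p.map F).copy e1 e2)
  simpa [hp, overlap] using this

lemma dist_proj_le (ρ : Set.range c → Set.range d)
    (hstep : ∀ x y, (coloringGraph c).Adj x y →
      ρ x = ρ y ∨ (coloringGraph d).Adj (ρ x) (ρ y)) (x y : Set.range c) :
    (coloringGraph d).dist (ρ x) (ρ y) ≤ (coloringGraph c).dist x y := by
  obtain ⟨p, hp⟩ := ((connected_coloringGraph c) x y).exists_walk_length_eq_dist
  rw [← hp]; clear hp
  induction p with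
  | nil => simp
  | @cons a v b h w ih =>
    have h1 : (coloringGraph d).dist (ρ a) (ρ v) ≤ 1 := by
      rcases hstep a v h with he | ha
      · rw [he, SimpleGraph.dist_self]; omega
      · simpa using SimpleGraph.dist_le ha.toWalk
    calc (coloringGraph d).dist (ρ a) (ρ b)
        ≤ (coloringGraph d).dist (ρ a) (ρ v) + (coloringGraph d).dist (ρ v) (ρ b) :=
          (connected_coloringGraph d).dist_triangle
      _ ≤ 1 + w.length := by omega
      _ = (SimpleGraph.Walk.cons h w).length := by simp [Nat.add_comm]

end Transfer

section Cut
variable {n : ℕ} {C : Type*} [NeZero n] (c : ZMod n → C)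

lemma cut_dist (P Q : C → Prop) (z : Set.range c)
    (hz : ∀ x : Set.range c, P x.1 → Q x.1 → x = z)
    (hstep : ∀ x y : Set.range c, (coloringGraph c).Adj x y →
      (P x.1 ∧ P y.1) ∨ (Q x.1 ∧ Q y.1)) :
    ∀ {x y : Set.range c} (w : (coloringGraph c).Walk x y), P x.1 → Q y.1 →
      (coloringGraph c).dist x z + (coloringGraph c).dist z y ≤ w.length := by
  intro x y w
  induction w with
  | nil =>
    intro hP hQ
    have := hz _ hP hQ
    subst this
    simp
  | @cons a v b h w ih =>
    intro hP hQ
    by_cases haz : a = z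
    · subst haz
      have := SimpleGraph.dist_le (SimpleGraph.Walk.cons h w)
      simpa [SimpleGraph.dist_self] using this
    · rcases hstep a v h with ⟨hPa, hPv⟩ | ⟨hQa, hQv⟩
      · have hIH := ih hPv hQ
        have h1 : (coloringGraph c).dist a z ≤ 1 + (coloringGraph c).dist v z := by
          have : (coloringGraph c).dist a v ≤ 1 := by
            simpa using SimpleGraph.dist_le h.toWalk
          have := (connected_coloringGraph c).dist_triangle (v := v) (u := a) (w := z)
          omega
        simp only [SimpleGraph.Walk.length_cons]
        omega
      · exact absurd (hz _ hP hQa) haz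

end Cut

set_option linter.unusedSectionVars false

section Injective
variable {n : ℕ} {C : Type*} [NeZero n] (c : ZMod n → C)

noncomputable def idx (x : Set.range c) : ZMod n := x.2.choose

lemma idx_spec (x : Set.range c) : c (idx c x) = x.1 := x.2.choose_spec

lemma walk_int (hinj : Function.Injective c) :
    ∀ {x y : Set.range c} (w : (coloringGraph c).Walk x y),
      ∃ s : ℤ, s.natAbs ≤ w.length ∧ (s : ZMod n) = idx c y - idx c x := by
  intro x y w
  induction w with
  | nil => exact ⟨0, by simp⟩
  | @cons a v b h w ih =>
    obtain ⟨s, hs1, hs2⟩ := ih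
    obtain ⟨hne, m, hm⟩ := (adj_iff _).mp h
    rcases hm with ⟨h1, h2⟩ | ⟨h1, h2⟩
    · have hia : idx c a = m := hinj (by rw [idx_spec c a, ← h1])
      have hiv : idx c v = m + 1 := hinj (by rw [idx_spec c v, ← h2])
      refine ⟨s + 1, by simp; omega, ?_⟩
      push_cast
      rw [hs2, hiv, hia]
      ring
    · have hia : idx c a = m + 1 := hinj (by rw [idx_spec c a, ← h2])
      have hiv : idx c v = m := hinj (by rw [idx_spec c v, ← h1])
      refine ⟨s - 1, by simp; omega, ?_⟩
      push_cast
      rw [hs2, hiv, hia]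
      ring

lemma inj_dist_lower (hinj : Function.Injective c) (a b : ZMod n) :
    min (b-a).val (n - (b-a).val) ≤ (coloringGraph c).dist (vert c a) (vert c b) := by
  obtain ⟨p, hp⟩ := (reachable_vert c a b).exists_walk_length_eq_dist
  obtain ⟨s, hs1, hs2⟩ := walk_int c hinj p
  have hia : idx c (vert c a) = a := hinj (idx_spec c _)
  have hib : idx c (vert c b) = b := hinj (idx_spec c _)
  rw [hia, hib] at hs2
  set k := (b-a).val with hk
  have hcast : ((k:ℕ) : ZMod n) = b - a := by rw [hk, ZMod.natCast_val, ZMod.cast_id]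
  have hsk : (s : ZMod n) = ((k:ℕ) : ZMod n) := by rw [hs2, hcast]
  have hdvd : (n:ℤ) ∣ s - (k:ℤ) := by
    have := (ZMod.intCast_eq_intCast_iff' s (k:ℤ) n).mp (by push_cast; exact_mod_cast hsk)
    exact Int.ModEq.dvd this.symm
  obtain ⟨t, ht⟩ := hdvd
  have hkn : k < n := ZMod.val_lt _
  rw [hp] at hs1
  have htri : s = (k:ℤ) ∨ s - (k:ℤ) ≥ n ∨ s - (k:ℤ) ≤ -(n:ℤ) := by
    rcases lt_trichotomy t 0 with hlt | rfl | hgt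
    · right; right
      have : (n:ℤ) * t ≤ (n:ℤ) * (-1) := by
        apply mul_le_mul_of_nonneg_left (by omega) (by positivity)
      omega
    · left; omega
    · right; left
      have : (n:ℤ) * 1 ≤ (n:ℤ) * t := by
        apply mul_le_mul_of_nonneg_left (by omega) (by positivity)
      omega
  omega

end Injective

section Rotate
variable {n : ℕ} {C : Type*} [NeZero n] (c : ZMod n → C)

lemma noncrossing_rotate (hc : Noncrossing c) (t : ZMod n) :
    Noncrossing (fun m => c (m + t)) := by
  rintro ⟨p, q, r, s, hpq, hqr, hrs, hs, h1, h2, h3⟩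
  simp only at h1 h2 h3
  set T := t.val with hT
  have key : ∀ x : ℕ, c ((x : ZMod n) + t) = c (((x + T : ℕ)) : ZMod n) := by
    intro x
    congr 1
    push_cast
    rw [ZMod.natCast_val, ZMod.cast_id]
  have kw : ∀ x : ℕ, n ≤ x → (((x - n : ℕ)) : ZMod n) = ((x:ℕ) : ZMod n) := by
    intro x hx
    rw [Nat.cast_sub hx]
    simp
  rw [key, key] at h1 h2 h3
  -- now h1 : c ↑(p+T) = c ↑(r+T), h2 : c ↑(q+T) = c ↑(s+T), h3 : c ↑(p+T) ≠ c ↑(q+T)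
  have hn1 : 1 ≤ n := Nat.one_le_iff_ne_zero.mpr (NeZero.ne n)
  have hTn : T < n := ZMod.val_lt t
  by_cases ws : n ≤ s + T
  · by_cases wr : n ≤ r + T
    · by_cases wq : n ≤ q + T
      · by_cases wp : n ≤ p + T
        · refine hc ⟨p+T-n, q+T-n, r+T-n, s+T-n, by omega, by omega, by omega, by omega, ?_, ?_, ?_⟩
          · rw [kw _ wp, kw _ wr]; exact h1
          · rw [kw _ wq, kw _ ws]; exact h2
          · rw [kw _ wp, kw _ wq]; exact h3
        · -- q r s wrap, p not
          refine hc ⟨q+T-n, r+T-n, s+T-n, p+T, by omega, by omega, by omega, by omega, ?_, ?_, ?_⟩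
          · rw [kw _ wq, kw _ ws]; exact h2
          · rw [kw _ wr]; exact h1.symm
          · rw [kw _ wq, kw _ wr]
            exact fun hh => h3 (h1.symm ▸ hh.symm) 
      · -- r s wrap, q not
        refine hc ⟨r+T-n, s+T-n, p+T, q+T, by omega, by omega, by omega, by omega, ?_, ?_, ?_⟩
        · rw [kw _ wr]; exact h1.symm
        · rw [kw _ ws]; exact h2.symm
        · rw [kw _ wr, kw _ ws]
          exact fun hh => h3 (h1.trans (hh.trans h2.symm))
    · -- only s wraps
      refine hc ⟨s+T-n, p+T, q+T, r+T, by omega, by omega, by omega, by omega, ?_, ?_, ?_⟩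
      · rw [kw _ ws]; exact h2.symm
      · exact h1
      · rw [kw _ ws]
        exact fun hh => h3 (h2.trans hh).symm
  · -- none wrap
    refine hc ⟨p+T, q+T, r+T, s+T, by omega, by omega, by omega, by omega, h1, h2, h3⟩

end Rotate

section Split
variable {n : ℕ} {C : Type*}

lemma zmv {m : ℕ} [NeZero m] (s : ZMod m) : ((s.val : ℕ) : ZMod m) = s := by
  rw [ZMod.natCast_val, ZMod.cast_id]

/-- the arc coloring `c1` on `[0, L]` (with `c 0 = c L` glued). -/
def arcC {n : ℕ} {C : Type*} (c : ZMod n → C) (L : ℕ) : ZMod L → C :=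
  fun m => c ((m.val : ℕ) : ZMod n)

variable [NeZero n] (c : ZMod n → C) (L : ℕ) [NeZero L]

lemma arcC_cast {x : ℕ} (hx : x < L) : arcC c L (x : ZMod L) = c ((x:ℕ) : ZMod n) := by
  unfold arcC
  rw [ZMod.val_natCast_of_lt hx]

lemma arcC_zero : arcC c L 0 = c 0 := by
  unfold arcC
  rw [ZMod.val_zero]
  norm_num

section WithHz
variable (hz : c 0 = c ((L:ℕ) : ZMod n)) (hL1 : 1 ≤ L) (hL2 : L ≤ n - 1)

lemma arcC_succ (hz : c 0 = c ((L:ℕ) : ZMod n)) {x : ℕ} (hx : x < L) :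
    arcC c L ((x : ZMod L) + 1) = c ((x+1 : ℕ) : ZMod n) := by
  have hcast : (x : ZMod L) + 1 = ((x+1 : ℕ) : ZMod L) := by push_cast; ring
  by_cases h : x + 1 < L
  · rw [hcast, arcC_cast c L h]
  · have hxl : x + 1 = L := by omega
    have h0 : (x : ZMod L) + 1 = 0 := by rw [hcast, hxl]; simp
    rw [h0, arcC_zero, hz, hxl]

lemma range_arcC (x : ZMod L) : arcC c L x ∈ Set.range c := ⟨_, rfl⟩

lemma steps_arcC (hz : c 0 = c ((L:ℕ) : ZMod n)) (s : ZMod L) :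
    arcC c L s = arcC c L (s+1) ∨ ∃ t : ZMod n,
      (c t = arcC c L s ∧ c (t+1) = arcC c L (s+1)) ∨
      (c t = arcC c L (s+1) ∧ c (t+1) = arcC c L s) := by
  refine Or.inr ⟨((s.val : ℕ) : ZMod n), Or.inl ⟨rfl, ?_⟩⟩
  have h1 : ((s.val : ℕ) : ZMod n) + 1 = ((s.val + 1 : ℕ) : ZMod n) := by push_cast; ring
  have h2 : arcC c L (s + 1) = arcC c L ((s.val : ZMod L) + 1) := by rw [zmv]
  rw [h1, h2, arcC_succ c L hz (ZMod.val_lt s)]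

lemma noncross_arcC (hc : Noncrossing c) (hL2 : L ≤ n - 1) : Noncrossing (arcC c L) := by
  rintro ⟨p, q, r, s, hpq, hqr, hrs, hs, h1, h2, h3⟩
  have hL : L ≤ n := by omega
  have hcast : ∀ x : ℕ, x ≤ L - 1 → arcC c L (x : ZMod L) = c ((x:ℕ) : ZMod n) := by
    intro x hx
    exact arcC_cast c L (by omega)
  rw [hcast p (by omega), hcast r (by omega)] at h1
  rw [hcast q (by omega), hcast s hs] at h2
  rw [hcast p (by omega), hcast q (by omega)] at h3
  exact hc ⟨p, q, r, s, hpq, hqr, hrs, by omega, h1, h2, h3⟩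

end WithHz
end Split

lemma zstep {n : ℕ} [NeZero n] (m : ZMod n) : (m + 1 : ZMod n) = ((m.val + 1 : ℕ) : ZMod n) := by
  rw [Nat.cast_add, Nat.cast_one, zmv]

section Split2
variable {n : ℕ} {C : Type*}

/-- the complementary arc coloring on `[L, n] (n ≡ 0)`. -/
def arcC2 {n : ℕ} {C : Type*} (c : ZMod n → C) (L : ℕ) : ZMod (n - L) → C :=
  fun m => c ((L + m.val : ℕ) : ZMod n)

variable [NeZero n] (c : ZMod n → C) (L : ℕ) [NeZero L] [NeZero (n - L)]

lemma arcC2_cast {x : ℕ} (hx : x < n - L) :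
    arcC2 c L (x : ZMod (n-L)) = c ((L + x : ℕ) : ZMod n) := by
  unfold arcC2
  rw [ZMod.val_natCast_of_lt hx]

lemma shared_arc (hc : Noncrossing c) (hz : c 0 = c ((L:ℕ) : ZMod n)) (hL2 : L ≤ n - 1)
    {x : C} (h1 : x ∈ Set.range (arcC c L)) (h2 : x ∈ Set.range (arcC2 c L)) : x = c 0 := by
  obtain ⟨m1, hm1⟩ := h1
  obtain ⟨m2, hm2⟩ := h2
  have hA : m1.val < L := ZMod.val_lt m1
  have hB : m2.val < n - L := ZMod.val_lt m2
  have e1 : c ((m1.val : ℕ) : ZMod n) = x := hm1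
  have e2 : c ((L + m2.val : ℕ) : ZMod n) = x := hm2
  by_cases hA0 : m1.val = 0
  · rw [← e1, hA0]; norm_num
  by_cases hB0 : m2.val = 0
  · rw [← e2, hB0, Nat.add_zero, ← hz]
  by_contra hne
  refine hc ⟨0, m1.val, L, L + m2.val, by omega, hA, by omega, by omega, ?_, ?_, ?_⟩
  · show c ((0:ℕ) : ZMod n) = c ((L:ℕ) : ZMod n)
    simpa using hz
  · exact e1.trans e2.symm
  · intro hh
    refine hne ?_
    rw [← e1, ← hh]
    norm_num

lemma mem_arc1 {m : ZMod n} (hm : m.val < L) : c m ∈ Set.range (arcC c L) :=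
  ⟨((m.val : ℕ) : ZMod L), by rw [arcC_cast c L hm, zmv]⟩

lemma mem_arc1' (hz : c 0 = c ((L:ℕ) : ZMod n)) {m : ZMod n} (hm : m.val < L) :
    c (m+1) ∈ Set.range (arcC c L) :=
  ⟨((m.val : ℕ) : ZMod L) + 1, by rw [arcC_succ c L hz hm, ← zstep m]⟩

lemma mem_arc2 {m : ZMod n} (hm : L ≤ m.val) : c m ∈ Set.range (arcC2 c L) := by
  have hv := ZMod.val_lt m
  refine ⟨((m.val - L : ℕ) : ZMod (n-L)), ?_⟩
  rw [arcC2_cast c L (by omega), show L + (m.val - L) = m.val by omega, zmv]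

lemma mem_arc2' (hz : c 0 = c ((L:ℕ) : ZMod n)) {m : ZMod n} (hm : L ≤ m.val) :
    c (m+1) ∈ Set.range (arcC2 c L) := by
  have hv := ZMod.val_lt m
  by_cases h : m.val + 1 < n
  · refine ⟨((m.val + 1 - L : ℕ) : ZMod (n-L)), ?_⟩
    rw [arcC2_cast c L (by omega), show L + (m.val + 1 - L) = m.val + 1 by omega, ← zstep m]
  · have h0 : (m+1 : ZMod n) = 0 := by
      rw [zstep m, show m.val + 1 = n by omega]
      simp
    rw [h0]
    refine ⟨0, ?_⟩
    rw [show ((0: ZMod (n-L))) = (((0:ℕ)) : ZMod (n-L)) by norm_num, arcC2_cast c L (by omega)]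
    rw [Nat.add_zero, ← hz]

lemma edge_class (hc : Noncrossing c) (hz : c 0 = c ((L:ℕ) : ZMod n)) (hL2 : L ≤ n - 1)
    {x y : Set.range c} (h : (coloringGraph c).Adj x y) :
    (∃ (h1 : x.1 ∈ Set.range (arcC c L)) (h2 : y.1 ∈ Set.range (arcC c L)),
      (coloringGraph (arcC c L)).Adj ⟨x.1, h1⟩ ⟨y.1, h2⟩) ∨
    (x.1 ∈ Set.range (arcC2 c L) ∧ y.1 ∈ Set.range (arcC2 c L)) := by
  obtain ⟨hne, m, hm⟩ := (adj_iff c).mp h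
  by_cases harc : m.val < L
  · left
    have hmem1 := mem_arc1 c L harc
    have hmem2 := mem_arc1' c L hz harc
    have hcm : c m ≠ c (m+1) := by
      rcases hm with ⟨h1, h2⟩ | ⟨h1, h2⟩
      · rw [h1, h2]; exact hne
      · rw [h1, h2]; exact fun hh => hne hh.symm
    have hadj : (coloringGraph (arcC c L)).Adj ⟨c m, hmem1⟩ ⟨c (m+1), hmem2⟩ := by
      rw [adj_iff]
      refine ⟨hcm, ((m.val : ℕ) : ZMod L), Or.inl ⟨?_, ?_⟩⟩
      · rw [arcC_cast c L harc, zmv]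
      · rw [arcC_succ c L hz harc, ← zstep m]
    rcases hm with ⟨h1, h2⟩ | ⟨h1, h2⟩
    · refine ⟨h1 ▸ hmem1, h2 ▸ hmem2, ?_⟩
      have ex : (⟨x.1, h1 ▸ hmem1⟩ : Set.range (arcC c L)) = ⟨c m, hmem1⟩ :=
        Subtype.ext h1.symm
      have ey : (⟨y.1, h2 ▸ hmem2⟩ : Set.range (arcC c L)) = ⟨c (m+1), hmem2⟩ :=
        Subtype.ext h2.symm
      rw [ex, ey]
      exact hadj
    · refine ⟨h2 ▸ hmem2, h1 ▸ hmem1, ?_⟩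
      have ex : (⟨x.1, h2 ▸ hmem2⟩ : Set.range (arcC c L)) = ⟨c (m+1), hmem2⟩ :=
        Subtype.ext h2.symm
      have ey : (⟨y.1, h1 ▸ hmem1⟩ : Set.range (arcC c L)) = ⟨c m, hmem1⟩ :=
        Subtype.ext h1.symm
      rw [ex, ey]
      exact hadj.symm
  · right
    push_neg at harc
    have hmem1 := mem_arc2 c L harc
    have hmem2 := mem_arc2' c L hz harc
    rcases hm with ⟨h1, h2⟩ | ⟨h1, h2⟩
    · exact ⟨h1 ▸ hmem1, h2 ▸ hmem2⟩
    · exact ⟨h2 ▸ hmem2, h1 ▸ hmem1⟩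

open Classical in
/-- projection of the full vertex set onto the arc vertex set -/
noncomputable def projArc (c : ZMod n → C) (L : ℕ) [NeZero L] :
    Set.range c → Set.range (arcC c L) :=
  fun x => if h : x.1 ∈ Set.range (arcC c L) then ⟨x.1, h⟩
    else ⟨arcC c L 0, Set.mem_range_self 0⟩

lemma projArc_mem (x : Set.range c) (h : x.1 ∈ Set.range (arcC c L)) :
    projArc c L x = ⟨x.1, h⟩ := dif_pos h

lemma projArc_z (hc : Noncrossing c) (hz : c 0 = c ((L:ℕ) : ZMod n)) (hL2 : L ≤ n - 1)
    (x : Set.range c) (h : x.1 ∈ Set.range (arcC2 c L)) :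
    projArc c L x = ⟨arcC c L 0, Set.mem_range_self 0⟩ := by
  by_cases hm : x.1 ∈ Set.range (arcC c L)
  · rw [projArc_mem c L x hm]
    refine Subtype.ext ?_
    show x.1 = arcC c L 0
    rw [arcC_zero c L]
    exact shared_arc c L hc hz hL2 hm h
  · exact dif_neg hm

lemma dist_arc1 (hc : Noncrossing c) (hz : c 0 = c ((L:ℕ) : ZMod n)) (hL2 : L ≤ n - 1)
    (v w : ZMod L) :
    (coloringGraph c).dist ⟨arcC c L v, range_arcC c L v⟩ ⟨arcC c L w, range_arcC c L w⟩
      = overlap (arcC c L) v w := by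
  apply le_antisymm
  · exact dist_le_transfer c (arcC c L) (range_arcC c L) (steps_arcC c L hz) v w
  · have hstep : ∀ x y, (coloringGraph c).Adj x y →
        projArc c L x = projArc c L y ∨
          (coloringGraph (arcC c L)).Adj (projArc c L x) (projArc c L y) := by
      intro x y h
      rcases edge_class c L hc hz hL2 h with ⟨h1, h2, hadj⟩ | ⟨h1, h2⟩
      · right
        rw [projArc_mem c L x h1, projArc_mem c L y h2]
        exact hadj
      · left
        rw [projArc_z c L hc hz hL2 x h1, projArc_z c L hc hz hL2 y h2]
    have hmain := dist_proj_le c (arcC c L) (projArc c L) hstep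
      ⟨arcC c L v, range_arcC c L v⟩ ⟨arcC c L w, range_arcC c L w⟩
    rw [projArc_mem c L _ (Set.mem_range_self v), projArc_mem c L _ (Set.mem_range_self w)]
      at hmain
    exact hmain

lemma cross_lower (hc : Noncrossing c) (hz : c 0 = c ((L:ℕ) : ZMod n)) (hL2 : L ≤ n - 1)
    {x y : Set.range c} (hx : x.1 ∈ Set.range (arcC c L)) (hy : y.1 ∈ Set.range (arcC2 c L)) :
    (coloringGraph c).dist x (vert c 0) + (coloringGraph c).dist (vert c 0) y
      ≤ (coloringGraph c).dist x y := by
  obtain ⟨p, hp⟩ := (connected_coloringGraph c x y).exists_walk_length_eq_dist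
  rw [← hp]
  refine cut_dist c (· ∈ Set.range (arcC c L)) (· ∈ Set.range (arcC2 c L)) (vert c 0)
    ?_ ?_ p hx hy
  · intro w hw1 hw2
    exact Subtype.ext (shared_arc c L hc hz hL2 hw1 hw2)
  · intro a b hab
    rcases edge_class c L hc hz hL2 hab with ⟨h1, h2, -⟩ | ⟨h1, h2⟩
    · exact Or.inl ⟨h1, h2⟩
    · exact Or.inr ⟨h1, h2⟩

lemma overlap_comm (a b : ZMod n) : overlap c a b = overlap c b a := by
  unfold overlap
  exact SimpleGraph.dist_comm

lemma split_cross (hc : Noncrossing c) (hz : c 0 = c ((L:ℕ) : ZMod n)) (hL2 : L ≤ n - 1)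
    (i j : ZMod n) (hI : i.val < L) (hJ : L ≤ j.val) :
    overlap c i (j + 1) + overlap c (i + 1) j ≤
      overlap c i j + overlap c (i + 1) (j + 1) := by
  have hconn := connected_coloringGraph c
  have ha : (vert c i).1 ∈ Set.range (arcC c L) := mem_arc1 c L hI
  have ha' : (vert c (i+1)).1 ∈ Set.range (arcC c L) := mem_arc1' c L hz hI
  have hb : (vert c j).1 ∈ Set.range (arcC2 c L) := mem_arc2 c L hJ
  have hb' : (vert c (j+1)).1 ∈ Set.range (arcC2 c L) := mem_arc2' c L hz hJ
  have hu : overlap c i (j+1) ≤ (coloringGraph c).dist (vert c i) (vert c 0) +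
      (coloringGraph c).dist (vert c 0) (vert c (j+1)) := hconn.dist_triangle
  have hv : overlap c (i+1) j ≤ (coloringGraph c).dist (vert c (i+1)) (vert c 0) +
      (coloringGraph c).dist (vert c 0) (vert c j) := hconn.dist_triangle
  have hx : (coloringGraph c).dist (vert c i) (vert c 0) +
      (coloringGraph c).dist (vert c 0) (vert c j) ≤ overlap c i j :=
    cross_lower c L hc hz hL2 ha hb
  have hy : (coloringGraph c).dist (vert c (i+1)) (vert c 0) +
      (coloringGraph c).dist (vert c 0) (vert c (j+1)) ≤ overlap c (i+1) (j+1) :=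
    cross_lower c L hc hz hL2 ha' hb'
  omega

lemma split_arc1 (hc : Noncrossing c) (hz : c 0 = c ((L:ℕ) : ZMod n)) (hL2 : L ≤ n - 1)
    (IH : ∀ (d : ZMod L → C), Noncrossing d → ∀ v w : ZMod L, v ≠ w →
      overlap d v (w+1) + overlap d (v+1) w ≤ overlap d v w + overlap d (v+1) (w+1))
    (i j : ZMod n) (hij : i ≠ j) (hI : i.val < L) (hJ : j.val < L) :
    overlap c i (j + 1) + overlap c (i + 1) j ≤
      overlap c i j + overlap c (i + 1) (j + 1) := by
  have vi : vert c i = ⟨arcC c L ((i.val : ℕ) : ZMod L), range_arcC c L _⟩ :=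
    Subtype.ext (show c i = arcC c L ((i.val : ℕ) : ZMod L) by
      rw [arcC_cast c L hI, zmv])
  have vj : vert c j = ⟨arcC c L ((j.val : ℕ) : ZMod L), range_arcC c L _⟩ :=
    Subtype.ext (show c j = arcC c L ((j.val : ℕ) : ZMod L) by
      rw [arcC_cast c L hJ, zmv])
  have vi' : vert c (i+1) = ⟨arcC c L (((i.val : ℕ) : ZMod L) + 1), range_arcC c L _⟩ :=
    Subtype.ext (show c (i+1) = arcC c L (((i.val : ℕ) : ZMod L) + 1) by
      rw [arcC_succ c L hz hI, ← zstep i])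
  have vj' : vert c (j+1) = ⟨arcC c L (((j.val : ℕ) : ZMod L) + 1), range_arcC c L _⟩ :=
    Subtype.ext (show c (j+1) = arcC c L (((j.val : ℕ) : ZMod L) + 1) by
      rw [arcC_succ c L hz hJ, ← zstep j])
  have e1 : overlap c i (j+1) = overlap (arcC c L) ((i.val : ℕ) : ZMod L) (((j.val : ℕ) : ZMod L) + 1) := by
    show (coloringGraph c).dist (vert c i) (vert c (j+1)) = _
    rw [vi, vj']
    exact dist_arc1 c L hc hz hL2 _ _
  have e2 : overlap c (i+1) j = overlap (arcC c L) (((i.val : ℕ) : ZMod L) + 1) ((j.val : ℕ) : ZMod L) := by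
    show (coloringGraph c).dist (vert c (i+1)) (vert c j) = _
    rw [vi', vj]
    exact dist_arc1 c L hc hz hL2 _ _
  have e3 : overlap c i j = overlap (arcC c L) ((i.val : ℕ) : ZMod L) ((j.val : ℕ) : ZMod L) := by
    show (coloringGraph c).dist (vert c i) (vert c j) = _
    rw [vi, vj]
    exact dist_arc1 c L hc hz hL2 _ _
  have e4 : overlap c (i+1) (j+1) = overlap (arcC c L) (((i.val : ℕ) : ZMod L) + 1) (((j.val : ℕ) : ZMod L) + 1) := by
    show (coloringGraph c).dist (vert c (i+1)) (vert c (j+1)) = _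
    rw [vi', vj']
    exact dist_arc1 c L hc hz hL2 _ _
  rw [e1, e2, e3, e4]
  refine IH (arcC c L) (noncross_arcC c L hc hL2) _ _ ?_
  intro hcontra
  apply hij
  have := congrArg ZMod.val hcontra
  rw [ZMod.val_natCast_of_lt hI, ZMod.val_natCast_of_lt hJ] at this
  rw [← zmv i, ← zmv j, this]

end Split2

section Rotate2
variable {n : ℕ} {C : Type*} [NeZero n]

lemma overlap_rotate (c : ZMod n → C) (t a b : ZMod n) :
    overlap (fun m => c (m + t)) a b = overlap c (a + t) (b + t) := by
  set d : ZMod n → C := fun m => c (m + t) with hd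
  have hr1 : ∀ x : ZMod n, d x ∈ Set.range c := fun x => ⟨x + t, rfl⟩
  have hs1 : ∀ s : ZMod n, d s = d (s+1) ∨ ∃ u : ZMod n,
      (c u = d s ∧ c (u+1) = d (s+1)) ∨ (c u = d (s+1) ∧ c (u+1) = d s) := by
    intro s
    refine Or.inr ⟨s + t, Or.inl ⟨rfl, ?_⟩⟩
    show c (s + t + 1) = c (s + 1 + t)
    congr 1
    ring
  have hr2 : ∀ x : ZMod n, c x ∈ Set.range d := by
    intro x
    refine ⟨x - t, ?_⟩
    show c (x - t + t) = c x
    congr 1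
    ring
  have hs2 : ∀ s : ZMod n, c s = c (s+1) ∨ ∃ u : ZMod n,
      (d u = c s ∧ d (u+1) = c (s+1)) ∨ (d u = c (s+1) ∧ d (u+1) = c s) := by
    intro s
    refine Or.inr ⟨s - t, Or.inl ⟨?_, ?_⟩⟩
    · show c (s - t + t) = c s
      congr 1
      ring
    · show c (s - t + 1 + t) = c (s + 1)
      congr 1
      ring
  apply le_antisymm
  · have h2 := dist_le_transfer d c hr2 hs2 (a + t) (b + t)
    have e1 : (⟨c (a+t), hr2 (a+t)⟩ : Set.range d) = vert d a := Subtype.ext rfl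
    have e2 : (⟨c (b+t), hr2 (b+t)⟩ : Set.range d) = vert d b := Subtype.ext rfl
    rw [e1, e2] at h2
    exact h2
  · have h1 := dist_le_transfer c d hr1 hs1 a b
    have e1 : (⟨d a, hr1 a⟩ : Set.range c) = vert c (a + t) := Subtype.ext rfl
    have e2 : (⟨d b, hr1 b⟩ : Set.range c) = vert c (b + t) := Subtype.ext rfl
    rw [e1, e2] at h1
    exact h1

end Rotate2

theorem key_ineq : ∀ (n : ℕ) [NeZero n] {C : Type*} (c : ZMod n → C), Noncrossing c →
    ∀ i j : ZMod n, i ≠ j →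
    overlap c i (j + 1) + overlap c (i + 1) j ≤ overlap c i j + overlap c (i + 1) (j + 1) := by
  intro n
  induction n using Nat.strong_induction_on with
  | _ n IH =>
    intro inst C c hc i j hij
    by_cases hinj : Function.Injective c
    · -- injective case: the coloring graph is a cycle
      set k := (j - i).val with hk
      have hkn : k < n := ZMod.val_lt _
      have hcast : ((k:ℕ) : ZMod n) = j - i := zmv _
      have hk1 : 1 ≤ k := by
        rcases Nat.eq_zero_or_pos k with h0 | h
        · exfalso
          have : j - i = 0 := by rw [← hcast, h0]; norm_num
          exact hij (sub_eq_zero.mp this).symm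
        · exact h
      have hx : min k (n - k) ≤ overlap c i j := inj_dist_lower c hinj i j
      have hy : min k (n - k) ≤ overlap c (i+1) (j+1) := by
        have h0 := inj_dist_lower c hinj (i+1) (j+1)
        have hd : (j+1) - (i+1) = j - i := by ring
        rw [hd] at h0
        exact h0
      have hu_cases : overlap c i (j+1) = 0 ∨
          (overlap c i (j+1) ≤ k + 1 ∧ overlap c i (j+1) ≤ n - k - 1) := by
        by_cases hA : k = n - 1
        · left
          have h1 : j - i = ((n-1 : ℕ) : ZMod n) := by rw [← hcast, hA]
          have h2 : ((n-1:ℕ) : ZMod n) = -1 := by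
            rw [Nat.cast_sub (by omega), ZMod.natCast_self]
            ring
          have h3 : j + 1 = i := by
            have := h1.trans h2
            linear_combination this
          rw [h3]
          exact SimpleGraph.dist_self
        · right
          constructor
          · have hcc : i + (((k+1:ℕ)) : ZMod n) = j + 1 := by
              push_cast
              rw [hcast]
              ring
            have h0 := dist_vert_le c i (k+1)
            rw [hcc] at h0
            exact h0
          · have hcc : (j + 1) + (((n - k - 1:ℕ)) : ZMod n) = i := by
              have e : ((n - k - 1 : ℕ) : ZMod n) = -(j - i) - 1 := by
                rw [show n - k - 1 = n - (k+1) by omega, Nat.cast_sub (by omega),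
                  ZMod.natCast_self]
                push_cast
                rw [hcast]
                ring
              rw [e]
              ring
            have h0 := dist_vert_le c (j+1) (n - k - 1)
            rw [hcc] at h0
            rw [overlap_comm]
            exact h0
      have hv_cases : overlap c (i+1) j = 0 ∨
          (overlap c (i+1) j ≤ k - 1 ∧ overlap c (i+1) j ≤ n - k + 1) := by
        by_cases hB : k = 1
        · left
          have h1 : j - i = 1 := by
            rw [← hcast, hB]
            norm_num
          have h3 : j = i + 1 := by linear_combination h1
          rw [h3]
          exact SimpleGraph.dist_self
        · right
          constructor
          · have hcc : (i + 1) + (((k-1:ℕ)) : ZMod n) = j := by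
              rw [Nat.cast_sub (by omega)]
              push_cast
              rw [hcast]
              ring
            have h0 := dist_vert_le c (i+1) (k-1)
            rw [hcc] at h0
            exact h0
          · have hcc : j + (((n - k + 1:ℕ)) : ZMod n) = i + 1 := by
              rw [show n - k + 1 = (n - k) + 1 by omega, Nat.cast_add,
                Nat.cast_sub (by omega), ZMod.natCast_self]
              push_cast
              rw [hcast]
              ring
            have h0 := dist_vert_le c j (n - k + 1)
            rw [hcc] at h0
            rw [overlap_comm]
            exact h0
      rcases hu_cases with h | ⟨h1, h2⟩ <;> rcases hv_cases with g | ⟨g1, g2⟩ <;> omega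
    · -- non-injective case: split at a repeated color
      rw [Function.Injective] at hinj
      push_neg at hinj
      obtain ⟨a, b, hab, hne⟩ := hinj
      obtain ⟨K, Lp, hKL, hLp, hcolKL⟩ : ∃ K Lp, K < Lp ∧ Lp ≤ n - 1 ∧
          c ((K:ℕ):ZMod n) = c ((Lp:ℕ):ZMod n) := by
        rcases lt_trichotomy a.val b.val with h | h | h
        · exact ⟨a.val, b.val, h, by have := ZMod.val_lt b; omega, by rw [zmv, zmv]; exact hab⟩
        · exact absurd (by rw [← zmv a, ← zmv b, h]) hne
        · exact ⟨b.val, a.val, h, by have := ZMod.val_lt a; omega, by rw [zmv, zmv]; exact hab.symm⟩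
      set t : ZMod n := ((K:ℕ) : ZMod n) with ht
      set c' : ZMod n → C := fun m => c (m + t) with hc'def
      have hc' : Noncrossing c' := noncrossing_rotate c hc t
      set L0 : ℕ := Lp - K with hL0
      have hL01 : 1 ≤ L0 := by omega
      have hL02 : L0 ≤ n - 1 := by omega
      have hn2 : 2 ≤ n := by omega
      have hz' : c' 0 = c' ((L0:ℕ) : ZMod n) := by
        show c (0 + t) = c (((L0:ℕ):ZMod n) + t)
        rw [zero_add]
        have e : ((L0:ℕ):ZMod n) + t = ((Lp:ℕ) : ZMod n) := by
          rw [ht, ← Nat.cast_add]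
          congr 1
          omega
        rw [e]
        exact hcolKL
      set i' := i - t with hi'
      set j' := j - t with hj'
      have hij' : i' ≠ j' := by
        intro h
        apply hij
        have := congrArg (· + t) h
        simpa [hi', hj'] using this
      have g1 : overlap c' i' (j'+1) = overlap c i (j+1) := by
        rw [overlap_rotate c t i' (j'+1), show i' + t = i from by rw [hi']; ring,
          show j' + 1 + t = j + 1 from by rw [hj']; ring]
      have g2 : overlap c' (i'+1) j' = overlap c (i+1) j := by
        rw [overlap_rotate c t (i'+1) j', show i' + 1 + t = i + 1 from by rw [hi']; ring,
          show j' + t = j from by rw [hj']; ring]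
      have g3 : overlap c' i' j' = overlap c i j := by
        rw [overlap_rotate c t i' j', show i' + t = i from by rw [hi']; ring,
          show j' + t = j from by rw [hj']; ring]
      have g4 : overlap c' (i'+1) (j'+1) = overlap c (i+1) (j+1) := by
        rw [overlap_rotate c t (i'+1) (j'+1), show i' + 1 + t = i + 1 from by rw [hi']; ring,
          show j' + 1 + t = j + 1 from by rw [hj']; ring]
      rw [← g1, ← g2, ← g3, ← g4]
      haveI : NeZero L0 := ⟨by omega⟩
      haveI : NeZero (n - L0) := ⟨by omega⟩
      by_cases hI : i'.val < L0
      · by_cases hJ : j'.val < L0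
        · exact split_arc1 c' L0 hc' hz' hL02
            (fun d hd v w hvw => IH L0 (by omega) d hd v w hvw) i' j' hij' hI hJ
        · exact split_cross c' L0 hc' hz' hL02 i' j' hI (le_of_not_gt hJ)
      · by_cases hJ : j'.val < L0
        · have hm := split_cross c' L0 hc' hz' hL02 j' i' hJ (le_of_not_gt hI)
          rw [overlap_comm c' j' (i'+1), overlap_comm c' (j'+1) i', overlap_comm c' j' i',
            overlap_comm c' (j'+1) (i'+1)] at hm
          omega
        · -- both in the second arc: rotate once more
          push_neg at hI hJ
          set t2 : ZMod n := ((L0:ℕ) : ZMod n) with ht2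
          set c'' : ZMod n → C := fun m => c' (m + t2) with hc''def
          have hc'' : Noncrossing c'' := noncrossing_rotate c' hc' t2
          set L1 : ℕ := n - L0 with hL1def
          have hL11 : 1 ≤ L1 := by omega
          have hL12 : L1 ≤ n - 1 := by omega
          have hz'' : c'' 0 = c'' ((L1:ℕ) : ZMod n) := by
            show c' (0 + t2) = c' (((L1:ℕ):ZMod n) + t2)
            rw [zero_add]
            have e : ((L1:ℕ):ZMod n) + t2 = 0 := by
              rw [ht2, ← Nat.cast_add, show L1 + L0 = n by omega, ZMod.natCast_self]
            rw [e]
            exact hz'.symm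
          set i'' := i' - t2 with hi''
          set j'' := j' - t2 with hj''
          have hij'' : i'' ≠ j'' := by
            intro h
            apply hij'
            have := congrArg (· + t2) h
            simpa [hi'', hj''] using this
          have hvi : i''.val = i'.val - L0 := by
            have e : i'' = ((i'.val - L0 : ℕ) : ZMod n) := by
              rw [hi'', ht2, Nat.cast_sub hI, zmv]
            rw [e, ZMod.val_natCast_of_lt (by have := ZMod.val_lt i'; omega)]
          have hvj : j''.val = j'.val - L0 := by
            have e : j'' = ((j'.val - L0 : ℕ) : ZMod n) := by
              rw [hj'', ht2, Nat.cast_sub hJ, zmv]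
            rw [e, ZMod.val_natCast_of_lt (by have := ZMod.val_lt j'; omega)]
          have hI'' : i''.val < L1 := by have := ZMod.val_lt i'; omega
          have hJ'' : j''.val < L1 := by have := ZMod.val_lt j'; omega
          have f1 : overlap c'' i'' (j''+1) = overlap c' i' (j'+1) := by
            rw [overlap_rotate c' t2 i'' (j''+1), show i'' + t2 = i' from by rw [hi'']; ring,
              show j'' + 1 + t2 = j' + 1 from by rw [hj'']; ring]
          have f2 : overlap c'' (i''+1) j'' = overlap c' (i'+1) j' := by
            rw [overlap_rotate c' t2 (i''+1) j'', show i'' + 1 + t2 = i' + 1 from by rw [hi'']; ring,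
              show j'' + t2 = j' from by rw [hj'']; ring]
          have f3 : overlap c'' i'' j'' = overlap c' i' j' := by
            rw [overlap_rotate c' t2 i'' j'', show i'' + t2 = i' from by rw [hi'']; ring,
              show j'' + t2 = j' from by rw [hj'']; ring]
          have f4 : overlap c'' (i''+1) (j''+1) = overlap c' (i'+1) (j'+1) := by
            rw [overlap_rotate c' t2 (i''+1) (j''+1),
              show i'' + 1 + t2 = i' + 1 from by rw [hi'']; ring,
              show j'' + 1 + t2 = j' + 1 from by rw [hj'']; ring]
          rw [← f1, ← f2, ← f3, ← f4]
          haveI : NeZero L1 := ⟨by omega⟩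
          haveI : NeZero (n - L1) := ⟨by omega⟩
          exact split_arc1 c'' L1 hc'' hz'' hL12
            (fun d hd v w hvw => IH L1 (by omega) d hd v w hvw) i'' j'' hij'' hI'' hJ''


/-- For a single noncrossing coloring `c` and `i ≠ j`, the discrete second difference of
the overlap number is nonnegative:
`h_c(i,j) + h_c(i+1,j+1) ≥ h_c(i,j+1) + h_c(i+1,j)`. -/

theorem overlap_second_difference_nonneg {n : ℕ} [NeZero n] {C : Type*}
    (c : ZMod n → C) (hc : Noncrossing c) (i j : ZMod n) (hij : i ≠ j) :
    overlap c i (j + 1) + overlap c (i + 1) j ≤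
      overlap c i j + overlap c (i + 1) (j + 1) := by
  exact key_ineq n c hc i j hij
end

section
/- For all i, j ∈ ZMod n (n ≥ 1) with i ≠ j and all m, m' ∈ ZMod n: h_{i,j}(m,m') + h_{i+1,j+1}(m,m') − h_{i,j+1}(m,m') − h_{i+1,j}(m,m') = 2(δ_{i m} δ_{j m'} + δ_{i m'} δ_{j m}). That is, the overlap function of the conditional mutual information CMI(i,j) on kinematic space equals 2δ^{ij,mm'}: the only pair of intervals which has a net overlap with CMI(i,j) is (Z_i, Z_j). -/
/-!
The cuts before `a` and `b` separate `x` and `y` exactly when one of `a`, `b` lies in the arc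
`(x, y] = [x + 1, y + 1)`, so with `c` the indicator of that arc,
`h_{a,b}(x,y) = c a + c b - 2 c a c b`. In the alternating sum of the theorem the linear terms
cancel and what is left is `-2 (c i - c (i + 1)) (c j - c (j + 1))`. Shifting the arc gives
`c t - c (t + 1) = δ_{t m'} - δ_{t m}`, and the diagonal products `δ_{i k} δ_{j k}` vanish
because `i ≠ j`.
-/

/-- Membership in the cyclic interval `[a,b)` of `ZMod n`: the set
`{a, a+1, …, b−1}` traversed cyclically, with `[a,a) = ∅`. -/
abbrev inCyc {n : ℕ} [NeZero n] (a b x : ZMod n) : Prop :=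
  (x - a).val < (b - a).val

/-- The overlap number of the two-block coloring of `ZMod n` with blocks `[a,b)` and its
complement: `h_{a,b}(m,m') = 1` if exactly one of `m, m'` lies in `[a,b)`, else `0`. -/
def hTwo {n : ℕ} [NeZero n] (a b m m' : ZMod n) : ℕ :=
  if (inCyc a b m ↔ inCyc a b m') then 0 else 1

namespace ZMod

theorem val_sub_eq_ite {n : ℕ} [NeZero n] (a b : ZMod n) :
    (a - b).val = if b.val ≤ a.val then a.val - b.val else a.val + n - b.val := by
  split_ifs with h
  · exact val_sub h
  · have hlt := (a - b).val_lt
    have hadd : n ≤ (a - b).val + b.val := by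
      by_contra! hsum
      have := val_add_of_lt hsum
      rw [sub_add_cancel] at this
      omega
    have := val_add_of_le hadd
    rw [sub_add_cancel] at this
    omega

end ZMod

section

variable {n : ℕ} [NeZero n]

def cycInd (a b x : ZMod n) : ℤ := if inCyc a b x then 1 else 0

theorem inCyc_add_one_iff (a b x : ZMod n) :
    inCyc (a + 1) (b + 1) x ↔ 0 < (x - a).val ∧ (x - a).val ≤ (b - a).val := by
  rw [inCyc, add_sub_add_right_eq_sub, sub_add_eq_sub_sub]
  obtain rfl | hn := eq_or_ne n 1
  · simp [Subsingleton.elim (x - a) 0, Subsingleton.elim (b - a) 0]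
  · have := (b - a).val_lt
    rw [ZMod.val_sub_eq_ite, ZMod.val_one'' hn]
    split_ifs <;> omega

theorem hTwo_eq_hTwo_add_one (a b x y : ZMod n) : hTwo a b x y = hTwo (x + 1) (y + 1) a b := by
  simp only [hTwo, inCyc_add_one_iff]
  simp only [inCyc, ZMod.val_sub_eq_ite]
  have := a.val_lt; have := b.val_lt; have := x.val_lt; have := y.val_lt
  split_ifs <;> omega

theorem cast_hTwo (a b x y : ZMod n) :
    (hTwo a b x y : ℤ) = cycInd a b x + cycInd a b y - 2 * cycInd a b x * cycInd a b y := by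
  unfold hTwo cycInd
  split_ifs <;> simp_all

theorem cycInd_add_right (a b c x : ZMod n) : cycInd (a + c) (b + c) (x + c) = cycInd a b x := by
  simp only [cycInd, inCyc, add_sub_add_right_eq_sub]

theorem cycInd_sub_cycInd_add_one (a b x : ZMod n) :
    cycInd a b x - cycInd (a + 1) (b + 1) x
      = (if x = a then 1 else 0) - (if x = b then 1 else 0) := by
  have hxa : x = a ↔ (x - a).val = 0 := by rw [ZMod.val_eq_zero, sub_eq_zero]
  have hxb : x = b ↔ (x - a).val = (b - a).val := by
    rw [(ZMod.val_injective n).eq_iff, sub_left_inj]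
  simp only [cycInd, inCyc_add_one_iff, hxa, hxb]
  split_ifs <;> omega

end

/-- The overlap function of the conditional mutual information `CMI(i,j)` on kinematic
space equals `2 δ^{ij,mm'}`: for `i ≠ j`,
`h_{i,j}(m,m') + h_{i+1,j+1}(m,m') − h_{i,j+1}(m,m') − h_{i+1,j}(m,m')
  = 2 (δ_{im} δ_{jm'} + δ_{im'} δ_{jm})`,
so the only pair of intervals with a net overlap with `CMI(i,j)` is `(Z_i, Z_j)`. -/
theorem cmi_overlap {n : ℕ} [NeZero n] (i j : ZMod n) (hij : i ≠ j) (m m' : ZMod n) :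
    (hTwo i j m m' : ℤ) + (hTwo (i + 1) (j + 1) m m' : ℤ)
      - (hTwo i (j + 1) m m' : ℤ) - (hTwo (i + 1) j m m' : ℤ)
    = 2 * ((if i = m then 1 else 0) * (if j = m' then 1 else 0)
         + (if i = m' then 1 else 0) * (if j = m then 1 else 0)) := by
  have hi := cycInd_sub_cycInd_add_one m m' i
  have hj := cycInd_sub_cycInd_add_one m m' j
  have diagonal_eq_zero : ∀ k : ZMod n,
      (if i = k then (1 : ℤ) else 0) * (if j = k then 1 else 0) = 0 := fun k => by
    rw [ite_zero_mul_ite_zero, if_neg fun h => hij (h.1.trans h.2.symm)]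
  rw [hTwo_eq_hTwo_add_one i j, hTwo_eq_hTwo_add_one (i + 1) (j + 1),
    hTwo_eq_hTwo_add_one i (j + 1), hTwo_eq_hTwo_add_one (i + 1) j]
  simp only [cast_hTwo, cycInd_add_right]
  linear_combination (-2) * (cycInd m m' j - cycInd (m + 1) (m' + 1) j) * hi
    + (-2) * ((if i = m then (1 : ℤ) else 0) - (if i = m' then 1 else 0)) * hj
    - 2 * diagonal_eq_zero m - 2 * diagonal_eq_zero m'
end

section
/- Let n ≥ 1 and let D, g : ZMod n → ZMod n → ℝ satisfy: D is symmetric, nonnegative, and D i i = 0 for all i; g is symmetric with g i i = 0 for all i; and for all i ≠ j, g i j + g (i+1)(j+1) ≥ g i (j+1) + g (i+1) j (strong subadditivity of g). Then Σ_{i,j ∈ ZMod n} (D(i,j) + D(i+1,j+1) − D(i,j+1) − D(i+1,j)) · g(i+1,j+1) ≥ 0. (By shifting summation indices this sum equals Σ_{i,j} D(i,j) · (g(i,j) + g(i+1,j+1) − g(i,j+1) − g(i+1,j)), i.e., a nonnegative combination of conditional mutual informations; this is the core of the identity reducing a holographic entropy inequality to instances of strong subadditivity.) -/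
/-!
Reindexing each of the four sums by the shift `i ↦ i + 1` (summation by parts) turns the
pairing into `Σ D(i,j) · (g(i,j) + g(i+1,j+1) - g(i,j+1) - g(i+1,j))`. Off the diagonal every
term is a nonnegative `D(i,j)` times a nonnegative strong-subadditivity defect of `g`; on the
diagonal `D` vanishes.
-/

open Finset

variable {α : Type*} [Fintype α]

def mixedDiff (σ : Equiv.Perm α) (F : α → α → ℝ) (i j : α) : ℝ :=
  F i j + F (σ i) (σ j) - F i (σ j) - F (σ i) j

theorem sum_mixedDiff_mul_eq_sum_mul_mixedDiff (σ : Equiv.Perm α) (D g : α → α → ℝ) :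
    ∑ i, ∑ j, mixedDiff σ D i j * g (σ i) (σ j) = ∑ i, ∑ j, D i j * mixedDiff σ g i j := by
  have shift_both : ∑ i, ∑ j, D (σ i) (σ j) * g (σ i) (σ j) = ∑ i, ∑ j, D i j * g i j := by
    rw [Equiv.sum_comp σ (fun i => ∑ j, D i (σ j) * g i (σ j))]
    exact sum_congr rfl fun i _ => Equiv.sum_comp σ (fun j => D i j * g i j)
  have shift_right : ∑ i, ∑ j, D i (σ j) * g (σ i) (σ j) = ∑ i, ∑ j, D i j * g (σ i) j :=
    sum_congr rfl fun i _ => Equiv.sum_comp σ (fun j => D i j * g (σ i) j)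
  have shift_left : ∑ i, ∑ j, D (σ i) j * g (σ i) (σ j) = ∑ i, ∑ j, D i j * g i (σ j) :=
    Equiv.sum_comp σ (fun i => ∑ j, D i j * g i (σ j))
  simp only [mixedDiff, sub_mul, add_mul, mul_add, mul_sub, sum_add_distrib, sum_sub_distrib]
  rw [shift_both, shift_right, shift_left]
  ring

theorem sum_mul_mixedDiff_nonneg (σ : Equiv.Perm α) {D g : α → α → ℝ}
    (hD : ∀ i j, 0 ≤ D i j) (hD₀ : ∀ i, D i i = 0)
    (hg : ∀ i j, i ≠ j → g i (σ j) + g (σ i) j ≤ g i j + g (σ i) (σ j)) :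
    0 ≤ ∑ i, ∑ j, D i j * mixedDiff σ g i j := by
  refine sum_nonneg fun i _ => sum_nonneg fun j _ => ?_
  obtain rfl | hij := eq_or_ne i j
  · simp [hD₀]
  · exact mul_nonneg (hD i j) (by unfold mixedDiff; linarith [hg i j hij])

theorem second_difference_pairing_nonneg_general {n : ℕ} [NeZero n]
    (D g : ZMod n → ZMod n → ℝ)
    (hDnn : ∀ i j, 0 ≤ D i j) (hD0 : ∀ i, D i i = 0)
    (hssa : ∀ i j : ZMod n, i ≠ j →
      g i (j + 1) + g (i + 1) j ≤ g i j + g (i + 1) (j + 1)) :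
    0 ≤ ∑ i : ZMod n, ∑ j : ZMod n,
      (D i j + D (i + 1) (j + 1) - D i (j + 1) - D (i + 1) j) * g (i + 1) (j + 1) :=
  (sum_mixedDiff_mul_eq_sum_mul_mixedDiff (Equiv.addRight 1) D g).symm ▸
    sum_mul_mixedDiff_nonneg (Equiv.addRight 1) hDnn hD0 hssa

/-- For functions `D, g : ZMod n → ZMod n → ℝ` with `D` symmetric, nonnegative, vanishing
on the diagonal, and `g` symmetric, vanishing on the diagonal, and strongly subadditive
(`g i j + g (i+1)(j+1) ≥ g i (j+1) + g (i+1) j` for `i ≠ j`), the sum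
`Σ_{i,j} (D(i,j) + D(i+1,j+1) − D(i,j+1) − D(i+1,j)) · g(i+1,j+1)` is nonnegative. -/
theorem second_difference_pairing_nonneg {n : ℕ} [NeZero n]
    (D g : ZMod n → ZMod n → ℝ)
    (hDsymm : ∀ i j, D i j = D j i) (hDnn : ∀ i j, 0 ≤ D i j) (hD0 : ∀ i, D i i = 0)
    (hgsymm : ∀ i j, g i j = g j i) (hg0 : ∀ i, g i i = 0)
    (hssa : ∀ i j : ZMod n, i ≠ j →
      g i (j + 1) + g (i + 1) j ≤ g i j + g (i + 1) (j + 1)) :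
    0 ≤ ∑ i : ZMod n, ∑ j : ZMod n,
      (D i j + D (i + 1) (j + 1) - D i (j + 1) - D (i + 1) j) * g (i + 1) (j + 1) :=
  second_difference_pairing_nonneg_general D g hDnn hD0 hssa
end

section
/- Define f : Bool³ → Bool³ by f(a,b,c) = (a ∧ (b ∨ c), a ∨ b ∨ c, b ∧ c); explicitly, f maps (0,0,0)↦(0,0,0), (0,0,1)↦(0,1,0), (0,1,0)↦(0,1,0), (0,1,1)↦(0,1,1), (1,0,0)↦(0,1,0), (1,0,1)↦(1,1,0), (1,1,0)↦(1,1,0), (1,1,1)↦(1,1,1). Then f is a contraction with unit weights: for all u, v ∈ Bool³, the Hamming distance satisfies d(u,v) ≥ d(f u, f v). Moreover f satisfies the occurrence-vector initial data for the inequality S(AB) + S(BC) + S(AC) ≥ S(AB) + S(ABC) + S(C) with coordinates (x_{AB}, x_{BC}, x_{AC}) and (y_{AB}, y_{ABC}, y_{C}): f(0,0,0) = (0,0,0) [region O], f(1,0,1) = (1,1,0) [region A], f(1,1,0) = (1,1,0) [region B], and f(0,1,1) = (0,1,1) [region C]. -/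
/-!
`f12` is monotone and preserves the number of `true` coordinates. On the Boolean cube the Hamming
distance is `d(u, v) = |u| + |v| - 2 |u ⊓ v|`, and a monotone weight-preserving map can only
increase the weight of the meet: `|u ⊓ v| = |f (u ⊓ v)| ≤ |f u ⊓ f v|`. Hence it cannot increase
the distance.
-/

/-- The contraction map `f(a,b,c) = (a ∧ (b ∨ c), a ∨ b ∨ c, b ∧ c)` for the inequality
`S(AB) + S(BC) + S(AC) ≥ S(AB) + S(ABC) + S(C)`, in coordinates
`(x_{AB}, x_{BC}, x_{AC})` and `(y_{AB}, y_{ABC}, y_C)`. -/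
def f12 : Bool × Bool × Bool → Bool × Bool × Bool :=
  fun p => (p.1 && (p.2.1 || p.2.2), p.1 || p.2.1 || p.2.2, p.2.1 && p.2.2)

/-- Hamming distance on `Bool³`. -/
def hamming3 (u v : Bool × Bool × Bool) : ℕ :=
  (if u.1 = v.1 then 0 else 1) + (if u.2.1 = v.2.1 then 0 else 1) +
    (if u.2.2 = v.2.2 then 0 else 1)

section WeightedLattice

variable {α β : Type*} [SemilatticeInf α] [SemilatticeInf β] {wα : α → ℕ} {wβ : β → ℕ}
  {dα : α → α → ℕ} {dβ : β → β → ℕ}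

theorem dist_map_le_of_monotone_of_weight_comp_eq
    (hdα : ∀ u v, dα u v + 2 * wα (u ⊓ v) = wα u + wα v)
    (hdβ : ∀ u v, dβ u v + 2 * wβ (u ⊓ v) = wβ u + wβ v)
    (hwβ : Monotone wβ) {f : α → β} (hf : Monotone f) (hfw : ∀ u, wβ (f u) = wα u) (u v : α) :
    dβ (f u) (f v) ≤ dα u v := by
  have hinf : wα (u ⊓ v) ≤ wβ (f u ⊓ f v) := hfw (u ⊓ v) ▸ hwβ (hf.map_inf_le u v)
  have := hdα u v
  have := hdβ (f u) (f v)
  rw [hfw, hfw] at this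
  omega

end WeightedLattice

theorem Bool.ite_eq_add_two_mul_toNat_inf (x y : Bool) :
    (if x = y then 0 else 1) + 2 * (x ⊓ y).toNat = x.toNat + y.toNat := by
  cases x <;> cases y <;> rfl

theorem Bool.toNat_and_add_toNat_or (x y : Bool) :
    (x && y).toNat + (x || y).toNat = x.toNat + y.toNat := by
  cases x <;> cases y <;> rfl

def weight3 (u : Bool × Bool × Bool) : ℕ :=
  u.1.toNat + u.2.1.toNat + u.2.2.toNat

theorem weight3_mono : Monotone weight3 := fun _ _ ⟨h₁, h₂, h₃⟩ =>
  add_le_add (add_le_add (Bool.toNat_le_toNat h₁) (Bool.toNat_le_toNat h₂))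
    (Bool.toNat_le_toNat h₃)

theorem hamming3_add_two_mul_weight3_inf (u v : Bool × Bool × Bool) :
    hamming3 u v + 2 * weight3 (u ⊓ v) = weight3 u + weight3 v := by
  have h₁ := Bool.ite_eq_add_two_mul_toNat_inf u.1 v.1
  have h₂ := Bool.ite_eq_add_two_mul_toNat_inf u.2.1 v.2.1
  have h₃ := Bool.ite_eq_add_two_mul_toNat_inf u.2.2 v.2.2
  simp only [hamming3, weight3, Prod.fst_inf, Prod.snd_inf]
  omega

theorem f12_mono : Monotone f12 := fun _ _ ⟨h₁, h₂, h₃⟩ =>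
  ⟨inf_le_inf h₁ (sup_le_sup h₂ h₃), sup_le_sup (sup_le_sup h₁ h₂) h₃, inf_le_inf h₂ h₃⟩

theorem weight3_f12 (u : Bool × Bool × Bool) : weight3 (f12 u) = weight3 u := by
  obtain ⟨a, b, c⟩ := u
  have h₁ := Bool.toNat_and_add_toNat_or a (b || c)
  have h₂ := Bool.toNat_and_add_toNat_or b c
  simp only [weight3, f12, Bool.or_assoc]
  omega

/-- `f12` is a contraction with unit weights, `d(u,v) ≥ d(f u, f v)` for the Hamming
distance on `Bool³`, and it satisfies the occurrence-vector initial data for the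
inequality `S(AB) + S(BC) + S(AC) ≥ S(AB) + S(ABC) + S(C)`:
`f(0,0,0) = (0,0,0)` [region `O`], `f(1,0,1) = (1,1,0)` [region `A`],
`f(1,1,0) = (1,1,0)` [region `B`], and `f(0,1,1) = (0,1,1)` [region `C`]. -/
theorem f12_contraction :
    (∀ u v : Bool × Bool × Bool, hamming3 (f12 u) (f12 v) ≤ hamming3 u v) ∧
    f12 (false, false, false) = (false, false, false) ∧
    f12 (true, false, true) = (true, true, false) ∧
    f12 (true, true, false) = (true, true, false) ∧
    f12 (false, true, true) = (false, true, true) :=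
  ⟨dist_map_le_of_monotone_of_weight_comp_eq hamming3_add_two_mul_weight3_inf
      hamming3_add_two_mul_weight3_inf weight3_mono f12_mono weight3_f12, rfl, rfl, rfl, rfl⟩
end

section
/- Let k ≥ 1 and let S : ZMod (2k) → ZMod (2k) → ℝ satisfy purity and strong subadditivity. Then for every permutation σ of ZMod k, Σ_{i ∈ ZMod k} S (R_{σ(i)}) (L_{σ(i+1)}) ≥ Σ_{i ∈ ZMod k} S (R_i) (L_{i+1}), where L_i := 2i and R_i := 2i + 1. That is, among all putative completely connected phases (X_{σ(0)} X_{σ(1)} ⋯ X_{σ(k−1)}) joining the intervals X_i in the cyclic order prescribed by σ, the total entropy is minimized when σ respects the spatial ordering; hence the minimal configuration always connects intervals according to their spatial ordering. -/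
/-! Add to the connected phase of `σ` the chords `L_i R_i` spanned by the intervals themselves:
the result is a closed tour through all `2k` boundary points, and the added chords cost the same
for every `σ`. Purity and strong subadditivity say that `S`, read on the points
`0 < 1 < ⋯ < 2k - 1`, is a Kalmanson matrix, and for a Kalmanson matrix the tour `0, 1, …, n - 1`
is the cheapest closed tour. That is proved by induction on `n`: delete the largest point from a
tour; the two Kalmanson inequalities show that re-inserting it between `n - 2` and `0` is never
more expensive than re-inserting it between any other two points. -/

/-- `a, b, c, d ∈ ZMod m` are in weak cyclic order: they admit integer representatives
`a' ≤ b' ≤ c' ≤ d' ≤ a' + m`. -/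
def CyclicOrdered {m : ℕ} (a b c d : ZMod m) : Prop :=
  ∃ a' b' c' d' : ℕ, a' ≤ b' ∧ b' ≤ c' ∧ c' ≤ d' ∧ d' ≤ a' + m ∧
    (a' : ZMod m) = a ∧ (b' : ZMod m) = b ∧ (c' : ZMod m) = c ∧ (d' : ZMod m) = d

/-- The left endpoint `L_i := 2i` of the interval `X_i`. -/
def Lpt {k : ℕ} (i : ZMod k) : ZMod (2 * k) := ((2 * i.val : ℕ) : ZMod (2 * k))

/-- The right endpoint `R_i := 2i + 1` of the interval `X_i`. -/
def Rpt {k : ℕ} (i : ZMod k) : ZMod (2 * k) := ((2 * i.val + 1 : ℕ) : ZMod (2 * k))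

open List

section CycleCost

variable {α β M : Type*} [AddCommMonoid M]

def cycleCost (c : α → α → M) (l : List α) : M := (zipWith c l (l.rotate 1)).sum

variable (c : α → α → M)

theorem cycleCost_rotate (l : List α) (k : ℕ) : cycleCost c (l.rotate k) = cycleCost c l := by
  rw [cycleCost, rotate_rotate, add_comm, ← rotate_rotate,
    ← zipWith_rotate_distrib _ _ _ _ (length_rotate l 1).symm]
  exact (rotate_perm _ k).sum_eq

theorem cycleCost_append_comm (l₁ l₂ : List α) :
    cycleCost c (l₁ ++ l₂) = cycleCost c (l₂ ++ l₁) := by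
  rw [← rotate_append_length_eq, cycleCost_rotate]

theorem sum_zipWith_cons_append_singleton (u x : α) (r : List α) :
    (zipWith c (u :: r) (r ++ [x])).sum =
      (zipWith c (u :: r) r).sum + c ((u :: r).getLast (cons_ne_nil u r)) x := by
  induction r generalizing u with
  | nil => simp
  | cons w r ih => simp [ih, add_assoc]

theorem cycleCost_cons_add (m : α) {p : List α} (hp : p ≠ []) :
    cycleCost c (m :: p) + c (p.getLast hp) (p.head hp) =
      cycleCost c p + c (p.getLast hp) m + c m (p.head hp) := by
  obtain ⟨u, r, rfl⟩ := exists_cons_of_ne_nil hp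
  simp only [cycleCost, rotate_cons_succ, rotate_zero, zipWith_cons_cons, sum_cons,
    sum_zipWith_cons_append_singleton, getLast_cons_cons, head_cons]
  abel

theorem cycleCost_flatMap_pair (f g : β → α) (L : List β) :
    cycleCost c (L.flatMap fun j => [f j, g j]) =
      (L.map fun j => c (f j) (g j)).sum + cycleCost (fun i j => c (g i) (f j)) L := by
  have hopen : ∀ (a e : β) (L : List β),
      (zipWith c (g a :: L.flatMap fun j => [f j, g j])
        ((L.flatMap fun j => [f j, g j]) ++ [f e])).sum =
      (L.map fun j => c (f j) (g j)).sum +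
        (zipWith (fun i j => c (g i) (f j)) (a :: L) (L ++ [e])).sum := by
    intro a e L
    induction L generalizing a with
    | nil => simp
    | cons y L ih =>
      simp only [flatMap_cons, cons_append, nil_append, zipWith_cons_cons, sum_cons, ih, map_cons]
      abel
  cases L with
  | nil => simp [cycleCost]
  | cons x L =>
    simp only [cycleCost, rotate_cons_succ, rotate_zero, flatMap_cons, cons_append, nil_append,
      zipWith_cons_cons, sum_cons, map_cons, hopen]
    abel

end CycleCost

/-- `c` is a Kalmanson matrix on the points `0 < 1 < ⋯ < n - 1`: in every quadrilateral
`a < b < x < d` the two diagonals `ax`, `bd` together cost at least as much as either pair of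
opposite sides. -/
structure IsKalmanson (n : ℕ) (c : ℕ → ℕ → ℝ) : Prop where
  symm : ∀ ⦃a b⦄, a < n → b < n → c a b = c b a
  add_le_diag_left : ∀ ⦃a b x d⦄, a < b → b < x → x < d → d < n →
    c a b + c x d ≤ c a x + c b d
  add_le_diag_right : ∀ ⦃a b x d⦄, a < b → b < x → x < d → d < n →
    c a d + c b x ≤ c a x + c b d

namespace IsKalmanson

variable {n : ℕ} {c : ℕ → ℕ → ℝ}

theorem mono {m : ℕ} (hc : IsKalmanson n c) (hmn : m ≤ n) : IsKalmanson m c where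
  symm _ _ ha hb := hc.symm (ha.trans_le hmn) (hb.trans_le hmn)
  add_le_diag_left _ _ _ _ hab hbx hxd hd := hc.add_le_diag_left hab hbx hxd (hd.trans_le hmn)
  add_le_diag_right _ _ _ _ hab hbx hxd hd := hc.add_le_diag_right hab hbx hxd (hd.trans_le hmn)

/-- Inserting the new largest point `m + 1` into a tour between consecutive points `v` and `u`
costs at least as much as inserting it between `m` and `0`. -/
theorem insertion_cost_le {m u v : ℕ} (hc : IsKalmanson (m + 2) c) (hu : u ≤ m) (hv : v ≤ m)
    (huv : u ≠ v) :
    c m (m + 1) + c (m + 1) 0 - c m 0 ≤ c v (m + 1) + c (m + 1) u - c v u := by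
  have hs : ∀ {x y}, x ≤ m + 1 → y ≤ m + 1 → c x y = c y x := fun hx hy =>
    hc.symm (by omega) (by omega)
  wlog h : u < v generalizing u v
  · have := this hv hu huv.symm (by omega)
    linarith [hs (x := u) (y := m + 1) (by omega) le_rfl,
      hs (x := m + 1) (y := v) le_rfl (by omega), hs (x := u) (y := v) (by omega) (by omega)]
  have hinner : c u v + c m (m + 1) ≤ c u m + c v (m + 1) := by
    rcases hv.eq_or_lt with rfl | hvm
    · rw [add_comm]
    · exact hc.add_le_diag_left h hvm m.lt_succ_self (by omega)
  have houter : c 0 (m + 1) + c u m ≤ c 0 m + c u (m + 1) := by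
    rcases (Nat.zero_le u).eq_or_lt with rfl | hu0
    · rw [add_comm]
    · exact hc.add_le_diag_right hu0 (h.trans_le hv) m.lt_succ_self (by omega)
  linarith [hs (x := m + 1) (y := 0) le_rfl (by omega), hs (x := m) (y := 0) (by omega) (by omega),
    hs (x := m + 1) (y := u) le_rfl (by omega), hs (x := v) (y := u) (by omega) (by omega)]

theorem cycleCost_cons_le (hc : IsKalmanson (n + 1) c) {p : List ℕ} (hp : p ~ range n)
    (h : cycleCost c (range n) ≤ cycleCost c p) :
    cycleCost c (n :: range n) ≤ cycleCost c (n :: p) := by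
  rcases n with _ | m
  · exact perm_nil.1 hp ▸ le_rfl
  have hne : p ≠ [] := ne_nil_of_length_pos (by rw [hp.length_eq, length_range]; omega)
  have hmem : ∀ x ∈ p, x ≤ m := fun x hx => Nat.lt_succ_iff.1 (mem_range.1 (hp.subset hx))
  have hins : c m (m + 1) + c (m + 1) 0 - c m 0 ≤
      c (p.getLast hne) (m + 1) + c (m + 1) (p.head hne) - c (p.getLast hne) (p.head hne) := by
    obtain ⟨u, r, rfl⟩ := exists_cons_of_ne_nil hne
    by_cases hr : r = []
    · subst hr
      obtain rfl : m = 0 := by simpa using hp.length_eq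
      obtain rfl : u = 0 := Nat.le_zero.1 (hmem u mem_cons_self)
      exact le_rfl
    refine hc.insertion_cost_le (hmem u mem_cons_self) (hmem _ (getLast_mem hne)) ?_
    rw [getLast_cons hr, head_cons]
    exact fun h => (nodup_cons.1 (hp.nodup_iff.2 nodup_range)).1 (h ▸ getLast_mem hr)
  have hcons := cycleCost_cons_add c (m + 1) hne
  have hrange := cycleCost_cons_add c (m + 1) (p := range (m + 1)) (by simp)
  simp only [getLast_range, head_range, add_tsub_cancel_right] at hrange
  linarith

theorem cycleCost_range_le (hc : IsKalmanson n c) {l : List ℕ} (hl : l ~ range n) :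
    cycleCost c (range n) ≤ cycleCost c l := by
  induction n generalizing l with
  | zero => exact perm_nil.1 hl ▸ le_rfl
  | succ n ih =>
    obtain ⟨l₁, l₂, rfl⟩ := append_of_mem (hl.mem_iff.2 self_mem_range_succ)
    rw [range_succ] at hl
    have hp : l₂ ++ l₁ ~ range n :=
      ((perm_middle.trans (perm_append_comm.cons n)).symm.trans
        (hl.trans (perm_append_singleton n _))).cons_inv
    rw [cycleCost_append_comm, range_succ, cycleCost_append_comm c (range n)]
    exact hc.cycleCost_cons_le hp (ih (hc.mono n.le_succ) hp)

theorem of_cyclicOrdered {S : ZMod n → ZMod n → ℝ} (hpure : ∀ a b, S a b = S b a)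
    (hssa : ∀ a b c d : ZMod n, CyclicOrdered a b c d → S b c + S a d ≤ S b d + S a c) :
    IsKalmanson n fun x y : ℕ => S x y where
  symm a b _ _ := hpure a b
  add_le_diag_left a b x d hab hbx hxd hdn := by
    have := hssa b x d a
      ⟨b, x, d, a + n, hbx.le, hxd.le, by omega, by omega, rfl, rfl, rfl, by simp⟩
    linarith [hpure a b, hpure a x]
  add_le_diag_right a b x d hab hbx hxd hdn := by
    have := hssa a b x d ⟨a, b, x, d, hab.le, hbx.le, hxd.le, by omega, rfl, rfl, rfl, rfl⟩
    linarith

end IsKalmanson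

theorem flatMap_range_pair_eq_range (k : ℕ) :
    (range k).flatMap (fun j => [2 * j, 2 * j + 1]) = range (2 * k) := by
  induction k with
  | zero => rfl
  | succ k ih => simp [range_succ, flatMap_append, ih, mul_add, append_assoc]

theorem nodup_map_range_natCast (n : ℕ) : ((range n).map (Nat.cast : ℕ → ZMod n)).Nodup :=
  nodup_range.map_on fun x hx y hy h => by
    rw [← ZMod.val_cast_of_lt (mem_range.1 hx), ← ZMod.val_cast_of_lt (mem_range.1 hy), h]

section ZModEnumeration

variable {α M : Type*} [AddCommMonoid M] {n : ℕ} [NeZero n]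

theorem mem_map_range_natCast (t : ZMod n) : t ∈ (range n).map (Nat.cast : ℕ → ZMod n) :=
  mem_map.2 ⟨t.val, mem_range.2 t.val_lt, ZMod.natCast_zmod_val t⟩

theorem sum_map_range_natCast (g : ZMod n → M) :
    ((range n).map fun j : ℕ => g j).sum = ∑ t : ZMod n, g t := by
  classical
  have h := sum_toFinset g (nodup_map_range_natCast n)
  rwa [map_map, Finset.eq_univ_of_forall fun t => mem_toFinset.2 (mem_map_range_natCast t),
    eq_comm] at h

theorem cycleCost_map_range_natCast (c : α → α → M) (τ : ZMod n → α) :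
    cycleCost c ((range n).map fun j : ℕ => τ j) = ∑ t : ZMod n, c (τ t) (τ (t + 1)) := by
  have hrot :
      ((range n).map fun j : ℕ => τ j).rotate 1 = (range n).map fun j : ℕ => τ (j + 1) := by
    obtain ⟨m, rfl⟩ := Nat.exists_eq_succ_of_ne_zero (NeZero.ne n)
    rw [← map_rotate]
    nth_rw 1 [range_succ_eq_map]
    simp [range_succ]
  rw [cycleCost, hrot, zipWith_map, zipWith_self, ← sum_map_range_natCast]

end ZModEnumeration

section IntervalTour

variable {k : ℕ}

/-- The closed tour `L_{σ 0}, R_{σ 0}, L_{σ 1}, R_{σ 1}, …` through the boundary points, each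
point `p : ZMod (2k)` recorded as `p.val`. -/
def intervalTour (σ : Equiv.Perm (ZMod k)) : List ℕ :=
  ((range k).map fun j : ℕ => σ j).flatMap fun i => [2 * i.val, 2 * i.val + 1]

theorem intervalTour_one : intervalTour (1 : Equiv.Perm (ZMod k)) = range (2 * k) := by
  rw [intervalTour, flatMap_map, ← flatMap_range_pair_eq_range]
  refine flatMap_congr fun j hj => ?_
  rw [Equiv.Perm.coe_one, id, ZMod.val_cast_of_lt (mem_range.1 hj)]

theorem intervalTour_perm [NeZero k] (σ : Equiv.Perm (ZMod k)) :
    intervalTour σ ~ range (2 * k) := by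
  rw [← intervalTour_one]
  refine Perm.flatMap_right _ ?_
  have hperm : ∀ τ : Equiv.Perm (ZMod k),
      (range k).map (fun j : ℕ => τ j) ~ (range k).map Nat.cast := fun τ => by
    rw [show (range k).map (fun j : ℕ => τ j) = ((range k).map Nat.cast).map τ by
      rw [map_map]; rfl]
    refine (perm_ext_iff_of_nodup ((nodup_map_range_natCast k).map τ.injective)
      (nodup_map_range_natCast k)).2 fun t => ?_
    simp only [mem_map_range_natCast, iff_true]
    exact mem_map.2 ⟨τ.symm t, mem_map_range_natCast _, τ.apply_symm_apply t⟩
  exact (hperm σ).trans (hperm 1).symm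

theorem cycleCost_intervalTour {M : Type*} [AddCommMonoid M] [NeZero k]
    (S : ZMod (2 * k) → ZMod (2 * k) → M) (σ : Equiv.Perm (ZMod k)) :
    cycleCost (fun x y : ℕ => S x y) (intervalTour σ) =
      ∑ i : ZMod k, S (Lpt (σ i)) (Rpt (σ i)) +
        ∑ i : ZMod k, S (Rpt (σ i)) (Lpt (σ (i + 1))) := by
  rw [intervalTour, cycleCost_flatMap_pair, map_map, cycleCost_map_range_natCast]
  exact congrArg (· + _) (sum_map_range_natCast fun i => S (Lpt (σ i)) (Rpt (σ i)))

end IntervalTour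

/-- Among all putative completely connected phases `(X_{σ(0)} X_{σ(1)} ⋯ X_{σ(k−1)})`
joining the intervals `X_i` in the cyclic order prescribed by a permutation `σ`, the
total entropy is minimized when `σ` respects the spatial ordering: for every entropy
function `S` satisfying purity and strong subadditivity,
`Σ_i S(R_{σ(i)}, L_{σ(i+1)}) ≥ Σ_i S(R_i, L_{i+1})`. -/
theorem connected_phase_spatial_order_minimal {k : ℕ} [NeZero k]
    (S : ZMod (2 * k) → ZMod (2 * k) → ℝ)
    (hpure : ∀ a b, S a b = S b a)
    (hssa : ∀ a b c d : ZMod (2 * k), CyclicOrdered a b c d →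
      S b c + S a d ≤ S b d + S a c)
    (σ : Equiv.Perm (ZMod k)) :
    ∑ i : ZMod k, S (Rpt i) (Lpt (i + 1)) ≤
      ∑ i : ZMod k, S (Rpt (σ i)) (Lpt (σ (i + 1))) := by
  have key := (IsKalmanson.of_cyclicOrdered hpure hssa).cycleCost_range_le (intervalTour_perm σ)
  rw [← intervalTour_one, cycleCost_intervalTour, cycleCost_intervalTour,
    Equiv.sum_comp σ fun i => S (Lpt i) (Rpt i)] at key
  simpa using key
end

section
/- Let k ≥ 3 and let S : ZMod (2k) → ZMod (2k) → ℝ satisfy purity and strong subadditivity. Then for all pairwise distinct a, m, b ∈ ZMod k, with L_i := 2i and R_i := 2i + 1: S (R_a) (L_m) + S (R_m) (L_b) − S (R_a) (L_b) ≥ S (R_{m−1}) (L_m) + S (R_m) (L_{m+1}) − S (R_{m−1}) (L_{m+1}). (This is the key inductive step in proving that the minimal connected phase respects the spatial ordering: removing the interval X_m from a cycle that visits …, X_a, X_m, X_b, … decreases the total length by at least as much as removing it from the spatially ordered cycle …, X_{m−1}, X_m, X_{m+1}, ….) -/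
theorem CyclicOrdered.of_le {N p q r s : ℕ} (hpq : p ≤ q) (hqr : q ≤ r) (hrs : r ≤ s)
    (hsp : s ≤ p + N) : CyclicOrdered (p : ZMod N) q r s :=
  ⟨p, q, r, s, hpq, hqr, hrs, hsp, rfl, rfl, rfl, rfl⟩

theorem CyclicOrdered.rotate {N : ℕ} {a b c d : ZMod N} (h : CyclicOrdered a b c d) :
    CyclicOrdered b c d a := by
  obtain ⟨a', b', c', d', hab, hbc, hcd, hda, rfl, rfl, rfl, rfl⟩ := h
  exact ⟨b', c', d', a' + N, hbc, hcd, hda, by omega, rfl, rfl, rfl, by simp⟩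

theorem Lpt_eq_natCast {k n : ℕ} {i : ZMod k} (h : (n : ZMod k) = i) :
    Lpt i = ((2 * n : ℕ) : ZMod (2 * k)) := by
  subst h
  rw [Lpt, ZMod.val_natCast, ZMod.natCast_eq_natCast_iff]
  exact (Nat.mod_modEq n k).mul_left' 2

theorem Rpt_eq_natCast {k n : ℕ} {i : ZMod k} (h : (n : ZMod k) = i) :
    Rpt i = ((2 * n + 1 : ℕ) : ZMod (2 * k)) := by
  subst h
  rw [Rpt, ZMod.val_natCast, ZMod.natCast_eq_natCast_iff]
  exact ((Nat.mod_modEq n k).mul_left' 2).add_right 1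

-- In the application `p₁, …, p₆` are `L_m, R_m, L_{m+1}, R_a, L_b, R_{m-1}`.
theorem ssa_hexagon {N : ℕ} (S : ZMod N → ZMod N → ℝ)
    (hpure : ∀ a b, S a b = S b a)
    (hssa : ∀ a b c d : ZMod N, CyclicOrdered a b c d → S b c + S a d ≤ S b d + S a c)
    {p₁ p₂ p₃ p₄ p₅ p₆ : ℕ} (h₁₂ : p₁ ≤ p₂) (h₂₃ : p₂ ≤ p₃) (h₃₄ : p₃ ≤ p₄) (h₄₅ : p₄ ≤ p₅)
    (h₅₆ : p₅ ≤ p₆) (h₆₁ : p₆ ≤ p₁ + N) :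
    S p₆ p₁ + S p₂ p₃ - S p₆ p₃ ≤ S p₄ p₁ + S p₂ p₅ - S p₄ p₅ := by
  have h₁ := hssa _ _ _ _ (CyclicOrdered.of_le h₁₂ (h₂₃.trans h₃₄) h₄₅ (by omega))
  have h₂ := hssa _ _ _ _ (CyclicOrdered.of_le h₂₃ h₃₄ (h₄₅.trans h₅₆) (by omega)).rotate
  have h₃ := hssa _ _ _ _ (CyclicOrdered.of_le (by omega) h₄₅ h₅₆ h₆₁)
  linarith [hpure p₂ p₄, hpure p₃ p₂, hpure p₁ p₆, hpure p₁ p₄, hpure p₃ p₆]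

-- In the application `p₁, …, p₆` are `L_m, R_m, L_{m+1}, L_b, R_a, R_{m-1}`.
theorem ssa_hexagon_swap {N : ℕ} (S : ZMod N → ZMod N → ℝ)
    (hpure : ∀ a b, S a b = S b a)
    (hssa : ∀ a b c d : ZMod N, CyclicOrdered a b c d → S b c + S a d ≤ S b d + S a c)
    {p₁ p₂ p₃ p₄ p₅ p₆ : ℕ} (h₁₂ : p₁ ≤ p₂) (h₂₃ : p₂ ≤ p₃) (h₃₄ : p₃ ≤ p₄) (h₄₅ : p₄ ≤ p₅)
    (h₅₆ : p₅ ≤ p₆) (h₆₁ : p₆ ≤ p₁ + N) :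
    S p₆ p₁ + S p₂ p₃ - S p₆ p₃ ≤ S p₅ p₁ + S p₂ p₄ - S p₅ p₄ := by
  have h₁ := hssa _ _ _ _
    (CyclicOrdered.of_le (h₁₂.trans h₂₃) (h₃₄.trans h₄₅) h₅₆ h₆₁).rotate.rotate
  have h₂ := hssa _ _ _ _ (CyclicOrdered.of_le h₂₃ h₃₄ h₄₅ (by omega)).rotate
  linarith [hpure p₅ p₃, hpure p₄ p₅, hpure p₃ p₂, hpure p₄ p₂]

/-- Key inductive step for showing the minimal connected phase respects the spatial
ordering: for `k ≥ 3`, an entropy function `S` satisfying purity and strong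
subadditivity, and pairwise distinct `a, m, b ∈ ZMod k`,
`S(R_a, L_m) + S(R_m, L_b) − S(R_a, L_b)
  ≥ S(R_{m−1}, L_m) + S(R_m, L_{m+1}) − S(R_{m−1}, L_{m+1})`:
removing `X_m` from a cycle visiting `…, X_a, X_m, X_b, …` decreases the total length by
at least as much as removing it from the spatially ordered cycle. -/
theorem remove_interval_step {k : ℕ} (hk : 3 ≤ k)
    (S : ZMod (2 * k) → ZMod (2 * k) → ℝ)
    (hpure : ∀ a b, S a b = S b a)
    (hssa : ∀ a b c d : ZMod (2 * k), CyclicOrdered a b c d →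
      S b c + S a d ≤ S b d + S a c)
    (a m b : ZMod k) (ham : a ≠ m) (hmb : m ≠ b) (hab : a ≠ b) :
    S (Rpt (m - 1)) (Lpt m) + S (Rpt m) (Lpt (m + 1)) - S (Rpt (m - 1)) (Lpt (m + 1)) ≤
      S (Rpt a) (Lpt m) + S (Rpt m) (Lpt b) - S (Rpt a) (Lpt b) := by
  have : NeZero k := ⟨by omega⟩
  set M := m.val
  set α := (a - m).val
  set β := (b - m).val
  have hα : 1 ≤ α := ZMod.val_pos.mpr (sub_ne_zero.mpr ham)
  have hβ : 1 ≤ β := ZMod.val_pos.mpr (sub_ne_zero.mpr hmb.symm)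
  have hαk : α < k := ZMod.val_lt _
  have hβk : β < k := ZMod.val_lt _
  have hαβ : α ≠ β := fun h => hab (sub_left_injective (ZMod.val_injective _ h))
  have hm : (M : ZMod k) = m := ZMod.natCast_zmod_val m
  have hm_succ : ((M + 1 : ℕ) : ZMod k) = m + 1 := by simp [hm]
  have hm_pred : ((M + (k - 1) : ℕ) : ZMod k) = m - 1 := by
    rw [Nat.cast_add, Nat.cast_sub (by omega), ZMod.natCast_self, hm]; ring
  have ha : ((M + α : ℕ) : ZMod k) = a := by simp [α, hm]
  have hb : ((M + β : ℕ) : ZMod k) = b := by simp [β, hm]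
  rw [Lpt_eq_natCast hm, Rpt_eq_natCast hm, Lpt_eq_natCast hm_succ, Rpt_eq_natCast hm_pred,
    Rpt_eq_natCast ha, Lpt_eq_natCast hb]
  rcases lt_or_gt_of_ne hαβ with h | h
  · exact ssa_hexagon S hpure hssa (by omega) (by omega) (by omega) (by omega) (by omega)
      (by omega)
  · exact ssa_hexagon_swap S hpure hssa (by omega) (by omega) (by omega) (by omega) (by omega)
      (by omega)
end
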